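/- arXiv:2107.04168 — 2 statements merged into one kernel-verified Lean document; each statement's English description precedes it below -/
import Mathlib

section
/- The set of squarefree monomials corresponding to <_d-chains is closed under the sorting operator: for any α, β ∈ Λ_{r,d}(N), if i_1 ≤ i_2 ≤ … ≤ i_{2r} is the nondecreasing rearrangement of the multiset {α_1,…,α_r,β_1,…,β_r}, then both tuples (i_1, i_3, …, i_{2r−1}) and (i_2, i_4, …, i_{2r}) again belong to Λ_{r,d}(N) (and they form a sorted pair). -/
open MvPolynomial

/-- `α ∈ Λ_{r,d}(N)`: `1 ≤ α_1`, `α_r ≤ N`, and `α_{j+1} > α_j + d`. -/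
def memLambda (d N : ℕ) {r : ℕ} (α : Fin r → ℕ) : Prop :=
  (∀ i : Fin r, (i : ℕ) = 0 → 1 ≤ α i) ∧
  (∀ i : Fin r, (i : ℕ) = r - 1 → α i ≤ N) ∧
  (∀ i j : Fin r, (i : ℕ) + 1 = (j : ℕ) → α i + d < α j)

/-- `(α,β)` is sorted: `α_1 ≤ β_1 ≤ α_2 ≤ β_2 ≤ … ≤ α_r ≤ β_r`. -/
def sortedPair {r : ℕ} (α β : Fin r → ℕ) : Prop :=
  (∀ j, α j ≤ β j) ∧ ∀ i j : Fin r, (i : ℕ) + 1 = (j : ℕ) → β i ≤ α j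

/-- the variable `x_i` of `R = K[x_1,…,x_N]` (1-based index). -/
noncomputable def xv (K : Type*) [Field K] (N : ℕ) (i : ℕ) : MvPolynomial (Fin N) K :=
  if h : 1 ≤ i ∧ i ≤ N then X ⟨i - 1, by omega⟩ else 0

/-- `M(α)`: the maximal minor of the extended Hankel matrix `H_{r,c,d}` whose
main diagonal is `x_{α_1},…,x_{α_r}`; its `(i,j)` entry is `x_{α_j + (i-j)d}`. -/
noncomputable def minorM (K : Type*) [Field K] (N d : ℕ) {r : ℕ} (α : Fin r → ℕ) :
    MvPolynomial (Fin N) K :=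
  Matrix.det (Matrix.of fun i j : Fin r => xv K N (α j + (i : ℕ) * d - (j : ℕ) * d))

/-- the lex-leading exponent of `f` (with `⊥` for `f = 0`), with respect to the
lexicographic order induced by `x_1 > x_2 > … > x_N`. -/
noncomputable def leadExp {K : Type*} [Field K] {N : ℕ} (f : MvPolynomial (Fin N) K) :
    WithBot (Lex (Fin N →₀ ℕ)) :=
  (f.support.image toLex).max

/-- the lex-leading exponent of a nonzero `f` as a monomial exponent vector. -/
noncomputable def leadExponent {K : Type*} [Field K] {N : ℕ} (f : MvPolynomial (Fin N) K) :
    Fin N →₀ ℕ :=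
  ofLex (WithBot.unbotD (toLex 0) (f.support.image toLex).max)

/-!
If `γ` is the sorted merge of two `d`-chains `α` and `β`, then `γ k + d < γ (k + 2)`: otherwise
`γ k, γ (k + 1), γ (k + 2)` are three entries in the window `[γ k, γ k + d]`, whereas each of `α`
and `β` has at most one entry in a window of width `d`. Hence the even- and odd-indexed
subsequences of `γ` are again `d`-chains, and their entries lie in `[1, N]` because every entry
of `γ` is an entry of `α` or of `β`.
-/

open Finset

theorem Multiset.countP_coe_ofFn {α : Type*} {n : ℕ} (f : Fin n → α) (P : α → Prop)
    [DecidablePred P] : Multiset.countP P (List.ofFn f : Multiset α) = #{i | P (f i)} := by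
  rw [← Fin.univ_val_map, Multiset.countP_map]; rfl

theorem card_filter_mem_Icc_le_one {d r : ℕ} {f : Fin r → ℕ}
    (hf : ∀ i j, i < j → f i + d < f j) (x : ℕ) : #{i | f i ∈ Set.Icc x (x + d)} ≤ 1 := by
  refine Finset.card_le_one.2 fun i hi j hj => ?_
  simp only [Finset.mem_filter, Finset.mem_univ, true_and, Set.mem_Icc] at hi hj
  by_contra hne
  rcases lt_or_gt_of_ne hne with h | h
  · have := hf i j h; omega
  · have := hf j i h; omega

theorem add_lt_of_monotone_of_coe_ofFn_eq_add {d r s n : ℕ} {α : Fin r → ℕ} {β : Fin s → ℕ}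
    (hα : ∀ i j, i < j → α i + d < α j) (hβ : ∀ i j, i < j → β i + d < β j)
    {γ : Fin n → ℕ} (hγ : Monotone γ)
    (hmult : (List.ofFn γ : Multiset ℕ) = (List.ofFn α : Multiset ℕ) + (List.ofFn β : Multiset ℕ))
    {k m : Fin n} (hkm : (k : ℕ) + 2 = m) : γ k + d < γ m := by
  by_contra! hm
  have hcount (W : Set ℕ) [DecidablePred (· ∈ W)] :
      #{i | γ i ∈ W} = #{i | α i ∈ W} + #{i | β i ∈ W} := by
    simp only [← Multiset.countP_coe_ofFn, hmult, Multiset.countP_add]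
  have hthree : #(Icc k m) ≤ #{i | γ i ∈ Set.Icc (γ k) (γ k + d)} := by
    refine Finset.card_le_card fun i hi => ?_
    obtain ⟨hki, him⟩ := Finset.mem_Icc.1 hi
    simp only [Finset.mem_filter, Finset.mem_univ, true_and, Set.mem_Icc]
    exact ⟨hγ hki, (hγ him).trans hm⟩
  rw [Fin.card_Icc] at hthree
  have := card_filter_mem_Icc_le_one hα (γ k)
  have := card_filter_mem_Icc_le_one hβ (γ k)
  have := hcount (Set.Icc (γ k) (γ k + d))
  omega

namespace memLambda

variable {d N r : ℕ} {α : Fin r → ℕ}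

theorem add_lt_of_lt (hα : memLambda d N α) {i j : Fin r} (hij : i < j) : α i + d < α j := by
  obtain ⟨j, hj⟩ := j
  induction j with
  | zero => exact absurd (Fin.lt_def.1 hij) (Nat.not_lt_zero _)
  | succ j ih =>
    have hstep := hα.2.2 ⟨j, by omega⟩ ⟨j + 1, hj⟩ rfl
    rcases Nat.lt_succ_iff_lt_or_eq.1 (Fin.lt_def.1 hij) with h | h
    · have := ih (by omega) h; omega
    · rwa [show i = ⟨j, by omega⟩ from Fin.ext h]

theorem monotone (hα : memLambda d N α) : Monotone α := fun i j hij => by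
  rcases hij.lt_or_eq with h | rfl
  · have := hα.add_lt_of_lt h; omega
  · rfl

theorem mem_Icc (hα : memLambda d N α) (i : Fin r) : α i ∈ Set.Icc 1 N := by
  have hi := i.isLt
  exact ⟨(hα.1 ⟨0, by omega⟩ rfl).trans (hα.monotone (Fin.le_def.2 (Nat.zero_le _))),
    (hα.monotone (Fin.le_def.2 (by simp; omega))).trans (hα.2.1 ⟨r - 1, by omega⟩ rfl)⟩

end memLambda

/-- the set of `<_d`-chains is closed under the sorting operator. -/
theorem sort_closed (d r N : ℕ)
    (α β : Fin r → ℕ) (hα : memLambda d N α) (hβ : memLambda d N β)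
    (γ : Fin (2 * r) → ℕ) (hmono : Monotone γ)
    (hmult : (List.ofFn γ : Multiset ℕ) = (List.ofFn α : Multiset ℕ) + (List.ofFn β : Multiset ℕ)) :
    memLambda d N (fun j : Fin r => γ ⟨2 * (j : ℕ), by have := j.isLt; omega⟩) ∧
    memLambda d N (fun j : Fin r => γ ⟨2 * (j : ℕ) + 1, by have := j.isLt; omega⟩) ∧
    sortedPair (fun j : Fin r => γ ⟨2 * (j : ℕ), by have := j.isLt; omega⟩)
      (fun j : Fin r => γ ⟨2 * (j : ℕ) + 1, by have := j.isLt; omega⟩) := by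
  have hgap (k m : Fin (2 * r)) (hkm : (k : ℕ) + 2 = m) : γ k + d < γ m :=
    add_lt_of_monotone_of_coe_ofFn_eq_add (fun _ _ => hα.add_lt_of_lt)
      (fun _ _ => hβ.add_lt_of_lt) hmono hmult hkm
  have hbound (k : Fin (2 * r)) : γ k ∈ Set.Icc 1 N := by
    have hk : γ k ∈ (List.ofFn α : Multiset ℕ) + (List.ofFn β : Multiset ℕ) := by
      rw [← hmult]; exact Multiset.mem_coe.2 (List.mem_ofFn.2 ⟨k, rfl⟩)
    rcases Multiset.mem_add.1 hk with h | h <;> obtain ⟨i, hi⟩ := List.mem_ofFn.1 h <;> rw [← hi]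
    exacts [hα.mem_Icc i, hβ.mem_Icc i]
  refine ⟨⟨fun _ _ => (hbound _).1, fun _ _ => (hbound _).2, fun _ _ h => hgap _ _ ?_⟩,
    ⟨fun _ _ => (hbound _).1, fun _ _ => (hbound _).2, fun _ _ h => hgap _ _ ?_⟩,
    fun _ => hmono ?_, fun _ _ h => hmono ?_⟩ <;> simp [Fin.le_def] <;> omega
end

section
/- For all integers 1 ≤ c_1 < c_2 < … < c_{r+1} ≤ c and all 1 ≤ k ≤ r, the identity Σ_{j=1}^{r+1} (−1)^{j+1} x_{c_j+(k−1)d} · M(c_1, c_2+d, …, c_{j−1}+(j−2)d, c_{j+1}+(j−1)d, …, c_{r+1}+(r−1)d) = 0 holds in R; that is, these alternating sums are syzygies of the maximal minors of the extended Hankel matrix H_{r,c,d}. -/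
open MvPolynomial

/-- The `r`-tuple `(c_1, c_2+d, …, c_{j−1}+(j−2)d, c_{j+1}+(j−1)d, …, c_{r+1}+(r−1)d)`
obtained from `c_1 < … < c_{r+1}` by omitting the `j`-th entry (here `j` is 0-based). -/
def tupleOf (d : ℕ) {r : ℕ} (cs : Fin (r + 1) → ℕ) (j : Fin (r + 1)) : Fin r → ℕ :=
  fun l => if (l : ℕ) < (j : ℕ) then cs (Fin.castSucc l) + (l : ℕ) * d
           else cs l.succ + (l : ℕ) * d

lemma tupleOf_mem {d r c N : ℕ} (hN : N = c + (r - 1) * d) (hr : 1 ≤ r)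
    (cs : Fin (r + 1) → ℕ) (hmono : StrictMono cs) (h1 : 1 ≤ cs 0)
    (hc : cs (Fin.last r) ≤ c) (j : Fin (r + 1)) :
    memLambda d N (tupleOf d cs j) := by
  have hm : ∀ a b : Fin (r + 1), (a : ℕ) ≤ (b : ℕ) → cs a ≤ cs b := by
    intro a b hab
    exact hmono.monotone (by exact_mod_cast (Fin.le_def.mpr hab))
  have hs : ∀ a b : Fin (r + 1), (a : ℕ) < (b : ℕ) → cs a < cs b := by
    intro a b hab
    exact hmono (by exact_mod_cast (Fin.lt_def.mpr hab))
  have hb : ∀ a : Fin (r + 1), cs a ≤ c := fun a => le_trans (hm a (Fin.last r) (by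
    have := a.isLt; simp [Fin.last]; omega)) hc
  have h01 : 1 ≤ cs ⟨1, by omega⟩ := le_trans h1 (le_of_lt (hs 0 ⟨1, by omega⟩ (by simp)))
  refine ⟨?_, ?_, ?_⟩
  · intro i hi
    unfold tupleOf
    split <;> rename_i h
    · have : cs (Fin.castSucc i) ≥ 1 := by
        refine le_trans h1 (hm 0 _ (by simp))
      omega
    · have : cs i.succ ≥ 1 := le_trans h1 (hm 0 _ (by simp))
      omega
  · intro i hi
    unfold tupleOf
    have hiv : (i : ℕ) = r - 1 := hi
    have hle1 : cs (Fin.castSucc i) ≤ c := hb _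
    have hle2 : cs i.succ ≤ c := hb _
    simp only [hiv]
    split <;> omega
  · intro i i' hii'
    unfold tupleOf
    have hv : (i' : ℕ) = (i : ℕ) + 1 := hii'.symm
    have hcs1 : cs (Fin.castSucc i) < cs (Fin.castSucc i') := hs _ _ (by simpa using (by omega : (i:ℕ) < (i':ℕ)))
    have hcs2 : cs (Fin.castSucc i) < cs i'.succ := hs _ _ (by simp; omega)
    have hcs3 : cs i.succ < cs i'.succ := hs _ _ (by simp; omega)
    have hcs4 : cs i.succ ≤ cs (Fin.castSucc i') := hm _ _ (by simp; omega)
    split <;> split <;> rename_i h h' <;> nlinarith [hv]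

/-- The left side is the expansion, along the top row, of the determinant of `A` with its
row `k` repeated on top, which vanishes. -/
theorem Matrix.sum_alternating_mul_det_submatrix_succAbove_eq_zero {R : Type*} [CommRing R]
    {r : ℕ} (A : Matrix (Fin r) (Fin (r + 1)) R) (k : Fin r) :
    ∑ j : Fin (r + 1), (-1 : R) ^ (j : ℕ) * (A k j * (A.submatrix id j.succAbove).det) = 0 := by
  set B : Matrix (Fin (r + 1)) (Fin (r + 1)) R := Matrix.of (Fin.cons (A k) A)
  have hB : B.det = 0 := Matrix.det_zero_of_row_eq (Fin.succ_ne_zero k).symm rfl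
  rw [Matrix.det_succ_row_zero] at hB
  simp only [mul_assoc] at hB
  exact hB

lemma tupleOf_eq_succAbove (d : ℕ) {r : ℕ} (cs : Fin (r + 1) → ℕ) (j : Fin (r + 1))
    (l : Fin r) : tupleOf d cs j l = cs (j.succAbove l) + l * d := by
  by_cases h : (l : ℕ) < j <;> simp [tupleOf, Fin.succAbove, h, Fin.lt_def]

/-- The `r × (r+1)` submatrix of `H_{r,c,d}` on the columns `c_1, …, c_{r+1}`. -/
noncomputable def hankelColumns (K : Type*) [Field K] (N d : ℕ) {r : ℕ} (cs : Fin (r + 1) → ℕ) :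
    Matrix (Fin r) (Fin (r + 1)) (MvPolynomial (Fin N) K) :=
  Matrix.of fun i j => xv K N (cs j + i * d)

lemma minorM_tupleOf (K : Type*) [Field K] (N d : ℕ) {r : ℕ} (cs : Fin (r + 1) → ℕ)
    (j : Fin (r + 1)) :
    minorM K N d (tupleOf d cs j) = ((hankelColumns K N d cs).submatrix id j.succAbove).det := by
  unfold minorM hankelColumns
  congr 1
  ext i l : 1
  simp only [tupleOf_eq_succAbove, Matrix.of_apply, Matrix.submatrix_apply, id]
  congr 1
  omega

theorem syzygy_identity_general (K : Type*) [Field K] (d r N : ℕ)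
    (cs : Fin (r + 1) → ℕ) (k : ℕ) (hk1 : 1 ≤ k) (hkr : k ≤ r) :
    ∑ j : Fin (r + 1), (-1 : MvPolynomial (Fin N) K) ^ (j : ℕ) *
        (xv K N (cs j + (k - 1) * d) * minorM K N d (tupleOf d cs j)) = 0 := by
  simpa only [minorM_tupleOf, hankelColumns, Matrix.of_apply] using
    Matrix.sum_alternating_mul_det_submatrix_succAbove_eq_zero (hankelColumns K N d cs)
      ⟨k - 1, by omega⟩

/-- the alternating sums `Σ_j (−1)^{j+1} x_{c_j+(k−1)d} M(…ĉ_j…)` vanish;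
they are syzygies of the maximal minors of `H_{r,c,d}`. -/
theorem syzygy_identity (K : Type*) [Field K] (d r c N : ℕ)
    (hd : 1 ≤ d) (hr : 2 ≤ r) (hrc : r ≤ c) (hN : N = c + (r - 1) * d)
    (cs : Fin (r + 1) → ℕ) (hmono : StrictMono cs) (h1 : 1 ≤ cs 0)
    (hcc : cs (Fin.last r) ≤ c) (k : ℕ) (hk1 : 1 ≤ k) (hkr : k ≤ r) :
    ∑ j : Fin (r + 1), (-1 : MvPolynomial (Fin N) K) ^ (j : ℕ) *
        (xv K N (cs j + (k - 1) * d) * minorM K N d (tupleOf d cs j)) = 0 :=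
  syzygy_identity_general K d r N cs k hk1 hkr
end
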